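/- arXiv:math/9907040 — 2 statements merged into one kernel-verified Lean document; each statement's English description precedes it below -/
import Mathlib

section
/- For single indices: χ_{-i, c} f_{-r,s} = c·f_{-r,s} + f_{-(i-1),s} f_{-r,-i} for -r ≤ -i < 0, and χ_{i,c} f_{-r,s} = c·f_{-r,s} − f_{-r,i-1} f_{i,s} for 0 < i ≤ s, as identities in U(G⁻ ⊕ H) modulo the left ideal U(G)G⁺. -/
/-! We model the universal enveloping superalgebra `U(sl(m+1/n+1))` faithfully by
working in an arbitrary ring `U` equipped with elements `E a b` (the images of the
matrix units `E_{ab}`, `1 ≤ a,b ≤ m+n+2`) satisfying the super-commutation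
relations of `gl(m+1/n+1)`; an identity holds in the enveloping algebra iff it
holds in every such `U`. -/

/-- Parity of the matrix unit `E_{ab}` (1-based indices): odd iff exactly one of
`a, b` lies in the second block `{m+2,…,m+n+2}`. -/
abbrev podd (m : ℕ) (a b : ℤ) : Bool :=
  xor (decide ((m : ℤ) + 1 < a)) (decide ((m : ℤ) + 1 < b))

/-- The sign `(−1)^{p(ab)p(cd)}`. -/
abbrev ssgn (m : ℕ) (a b c d : ℤ) : ℤ :=
  if podd m a b && podd m c d then -1 else 1

/-- The defining super-commutation relations of `gl(m+1/n+1)`: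
`[E_{ab}, E_{cd}] = δ_{bc} E_{ad} − (−1)^{p(ab)p(cd)} δ_{da} E_{cb}`. -/
def glRel (m n : ℕ) {U : Type*} [Ring U] (E : ℤ → ℤ → U) : Prop :=
  ∀ a b c d : ℤ,
    1 ≤ a → a ≤ (m : ℤ) + n + 2 → 1 ≤ b → b ≤ (m : ℤ) + n + 2 →
    1 ≤ c → c ≤ (m : ℤ) + n + 2 → 1 ≤ d → d ≤ (m : ℤ) + n + 2 →
    E a b * E c d = ssgn m a b c d • (E c d * E a b) +
      ((if b = c then E a d else 0) - ssgn m a b c d • (if d = a then E c b else 0))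

/-- The root vector `e_{ij} = E_{m+i+1, m+j+2}` for `i ≤ j` in `I = {-m,…,n}`. -/
abbrev eV (m : ℕ) {U : Type*} [Ring U] (E : ℤ → ℤ → U) (i j : ℤ) : U :=
  E ((m : ℤ) + i + 1) ((m : ℤ) + j + 2)

/-- The root vector `f_{ij} = E_{m+j+2, m+i+1}`. -/
abbrev fV (m : ℕ) {U : Type*} [Ring U] (E : ℤ → ℤ → U) (i j : ℤ) : U :=
  E ((m : ℤ) + j + 2) ((m : ℤ) + i + 1)

/-- The Cartan element `h_{ij} = E_{m+i+1,m+i+1} − (−1)^{σ_{ij}} E_{m+j+2,m+j+2}`,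
where `σ_{ij} = 1` iff `α_{ij}` is odd, i.e. `i ≤ 0 ≤ j`. -/
abbrev hV (m : ℕ) {U : Type*} [Ring U] (E : ℤ → ℤ → U) (i j : ℤ) : U :=
  E ((m : ℤ) + i + 1) ((m : ℤ) + i + 1)
    - (if i ≤ 0 ∧ 0 ≤ j then (-1 : ℤ) else 1) • E ((m : ℤ) + j + 2) ((m : ℤ) + j + 2)

/-- The sign `(−1)^{|e_{ij}||e_{kl}|}` for root vectors: `e_{ij}` is odd iff `i ≤ 0 ≤ j`. -/
abbrev obr (i j k l : ℤ) : ℤ :=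
  if (i ≤ 0 ∧ 0 ≤ j) ∧ (k ≤ 0 ∧ 0 ≤ l) then -1 else 1

/-- The zero-weight element `Ω_i ∈ U(G)`:
`Ω_i = 1 − Σ_{-m ≤ k ≤ i} f_{ki} e_{ki}` for `i < 0`, and
`Ω_i = 1 − Σ_{i ≤ k ≤ n} f_{ik} e_{ik}` for `i > 0`. -/
noncomputable abbrev OmegaV (m n : ℕ) {U : Type*} [Ring U] (E : ℤ → ℤ → U) (i : ℤ) : U :=
  if i < 0 then 1 - ∑ k ∈ Finset.Icc (-(m : ℤ)) i, fV m E k i * eV m E k i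
  else 1 - ∑ k ∈ Finset.Icc i (n : ℤ), fV m E i k * eV m E i k

/-- The element `ω_i ∈ ℂ ⊕ H`: `ω_i = m+1+i+h_{-m,i}` for `i < 0` and
`ω_i = n+1−i+h_{i,n}` for `i > 0`. -/
noncomputable abbrev omegaV (m n : ℕ) {U : Type*} [Ring U] (E : ℤ → ℤ → U) (i : ℤ) : U :=
  if i < 0 then (((m : ℤ) + 1 + i : ℤ) : U) + hV m E (-(m : ℤ)) i
  else (((n : ℤ) + 1 - i : ℤ) : U) + hV m E i (n : ℤ)

/-- `X_i = ω_i + Ω_i`. -/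
noncomputable abbrev XV (m n : ℕ) {U : Type*} [Ring U] (E : ℤ → ℤ → U) (i : ℤ) : U :=
  omegaV m n E i + OmegaV m n E i

/-- The left ideal `U(G)G⁺ ⊆ U(G)`: the span of elements `u * e(α)`, `α ∈ Δ⁺`,
i.e. `u * E_{ab}` with `a < b` (strictly upper triangular matrix units). -/
noncomputable def Kid (m n : ℕ) {U : Type*} [Ring U] [Algebra ℂ U] (E : ℤ → ℤ → U) :
    Submodule ℂ U :=
  Submodule.span ℂ
    {x | ∃ u : U, ∃ a b : ℤ, 1 ≤ a ∧ a < b ∧ b ≤ (m : ℤ) + n + 2 ∧ x = u * E a b}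

/-- The subalgebra `U(G⁻ ⊕ H) ⊆ U(G)`: generated by the `E_{ab}` with `b ≤ a`
(lower triangular and diagonal matrix units, i.e. the `f`'s and the Cartan). -/
noncomputable def Lsub (m n : ℕ) {U : Type*} [Ring U] [Algebra ℂ U] (E : ℤ → ℤ → U) :
    Subalgebra ℂ U :=
  Algebra.adjoin ℂ {x | ∃ a b : ℤ, 1 ≤ b ∧ b ≤ a ∧ a ≤ (m : ℤ) + n + 2 ∧ x = E a b}

/-- The operator `χ_{i,c} g = c • g + φ(Ω_i g)`, where `φ` is the projection
`U(G) → U(G⁻ ⊕ H)` along `U(G)G⁺`. -/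
noncomputable def chiOp (m n : ℕ) {U : Type*} [Ring U] [Algebra ℂ U] (E : ℤ → ℤ → U)
    (φ : U →ₗ[ℂ] U) (i : ℤ) (c : ℂ) (g : U) : U :=
  c • g + φ (OmegaV m n E i * g)

/-! Write `Ω_i = 1 - Σ_k f_k e_k` and move each `e_k` to the right of `f_{-r,s}`, where it
lands in `U(G)G⁺`. Only one `e_k` (`k = -r`, resp. `k = s`) fails to commute with `f_{-r,s}`;
its commutator is a single root vector, and reordering its product with `f_k` once more
yields the quadratic term `f_{-(i-1),s} f_{-r,-i}`, resp. `-f_{-r,i-1} f_{i,s}`. Everything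
else lies in `U(G⁻ ⊕ H)`, where the projection is the identity. -/

theorem Finset.sum_mul_mul_eq_of_mul_eq {R ι : Type*} [Ring R] [DecidableEq ι]
    {s : Finset ι} {k₀ : ι} (hk₀ : k₀ ∈ s) (a b : ι → R) {x y : R}
    (hcomm : ∀ k ∈ s, k ≠ k₀ → b k * x = x * b k) (hcomm₀ : b k₀ * x = x * b k₀ + y) :
    (∑ k ∈ s, a k * b k) * x = ∑ k ∈ s, a k * x * b k + a k₀ * y := by
  have hterm : ∀ k ∈ s, a k * b k * x = a k * x * b k + if k = k₀ then a k₀ * y else 0 := by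
    intro k hk
    by_cases hk' : k = k₀
    · subst hk'
      rw [mul_assoc, hcomm₀, if_pos rfl, mul_add, mul_assoc]
    · rw [mul_assoc, hcomm k hk hk', if_neg hk', add_zero, mul_assoc]
  rw [Finset.sum_mul, Finset.sum_congr rfl hterm, Finset.sum_add_distrib,
    Finset.sum_ite_eq' s k₀, if_pos hk₀]

section Relations

variable {m n : ℕ} {U : Type*} [Ring U] {E : ℤ → ℤ → U} {a b c d : ℤ}

/-- `E_{ab}` is even exactly when `a` and `b` lie in the same block. -/
theorem glRel.mul_comm_of_even (hE : glRel m n E)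
    (ha : a ∈ Set.Icc 1 ((m : ℤ) + n + 2)) (hb : b ∈ Set.Icc 1 ((m : ℤ) + n + 2))
    (hc : c ∈ Set.Icc 1 ((m : ℤ) + n + 2)) (hd : d ∈ Set.Icc 1 ((m : ℤ) + n + 2))
    (hab : (m : ℤ) + 1 < a ↔ (m : ℤ) + 1 < b) :
    E a b * E c d =
      E c d * E a b + ((if b = c then E a d else 0) - if d = a then E c b else 0) := by
  have h := hE a b c d ha.1 ha.2 hb.1 hb.2 hc.1 hc.2 hd.1 hd.2
  have hp : podd m a b = false := by simp [podd, hab]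
  simpa only [ssgn, hp, Bool.false_and, Bool.false_eq_true, if_false, one_smul] using h

theorem glRel.mul_comm_of_ne (hE : glRel m n E)
    (ha : a ∈ Set.Icc 1 ((m : ℤ) + n + 2)) (hb : b ∈ Set.Icc 1 ((m : ℤ) + n + 2))
    (hc : c ∈ Set.Icc 1 ((m : ℤ) + n + 2)) (hd : d ∈ Set.Icc 1 ((m : ℤ) + n + 2))
    (hab : (m : ℤ) + 1 < a ↔ (m : ℤ) + 1 < b) (hbc : b ≠ c) (hda : d ≠ a) :
    E a b * E c d = E c d * E a b := by
  rw [hE.mul_comm_of_even ha hb hc hd hab, if_neg hbc, if_neg hda, sub_zero, add_zero]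

theorem glRel.mul_comm_of_eq_left (hE : glRel m n E)
    (ha : a ∈ Set.Icc 1 ((m : ℤ) + n + 2)) (hb : b ∈ Set.Icc 1 ((m : ℤ) + n + 2))
    (hc : c ∈ Set.Icc 1 ((m : ℤ) + n + 2)) (hd : d ∈ Set.Icc 1 ((m : ℤ) + n + 2))
    (hab : (m : ℤ) + 1 < a ↔ (m : ℤ) + 1 < b) (hbc : b ≠ c) (hda : d = a) :
    E a b * E c d = E c d * E a b - E c b := by
  rw [hE.mul_comm_of_even ha hb hc hd hab, if_neg hbc, if_pos hda, zero_sub, sub_eq_add_neg]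

theorem glRel.mul_comm_of_eq_right (hE : glRel m n E)
    (ha : a ∈ Set.Icc 1 ((m : ℤ) + n + 2)) (hb : b ∈ Set.Icc 1 ((m : ℤ) + n + 2))
    (hc : c ∈ Set.Icc 1 ((m : ℤ) + n + 2)) (hd : d ∈ Set.Icc 1 ((m : ℤ) + n + 2))
    (hab : (m : ℤ) + 1 < a ↔ (m : ℤ) + 1 < b) (hbc : b = c) (hda : d ≠ a) :
    E a b * E c d = E c d * E a b + E a d := by
  rw [hE.mul_comm_of_even ha hb hc hd hab, if_pos hbc, if_neg hda, sub_zero]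

end Relations

section Projection

variable {m n : ℕ} {U : Type*} [Ring U] [Algebra ℂ U] {E : ℤ → ℤ → U}

theorem E_mem_Lsub {a b : ℤ} (hb : 1 ≤ b) (hba : b ≤ a) (ha : a ≤ (m : ℤ) + n + 2) :
    E a b ∈ Lsub m n E :=
  Algebra.subset_adjoin ⟨a, b, hb, hba, ha, rfl⟩

theorem mul_E_mem_Kid (u : U) {a b : ℤ} (ha : 1 ≤ a) (hab : a < b)
    (hb : b ≤ (m : ℤ) + n + 2) : u * E a b ∈ Kid m n E :=
  Submodule.subset_span ⟨u, a, b, ha, hab, hb, rfl⟩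

theorem chiOp_sub_mem_Kid {φ : U →ₗ[ℂ] U} (hfix : ∀ g ∈ Lsub m n E, φ g = g)
    (hker : ∀ x ∈ Kid m n E, φ x = 0) {i : ℤ} (c : ℂ) {g l : U} (hl : l ∈ Lsub m n E)
    (h : OmegaV m n E i * g - l ∈ Kid m n E) :
    chiOp m n E φ i c g - (c • g + l) ∈ Kid m n E := by
  have hφ : φ (OmegaV m n E i * g) = l := by
    have := hker _ h
    rwa [map_sub, hfix l hl, sub_eq_zero] at this
  rw [chiOp, hφ, sub_self]
  exact zero_mem _

end Projection

section Expansion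

variable {m n : ℕ} {U : Type*} [Ring U] [Algebra ℂ U] {E : ℤ → ℤ → U} {r s i : ℤ}

theorem OmegaV_neg_mul_fV_sub_mem_Kid (hE : glRel m n E) (hi : 1 ≤ i) (hir : i ≤ r)
    (hrm : r ≤ (m : ℤ)) (hs0 : 0 ≤ s) (hsn : s ≤ (n : ℤ)) :
    OmegaV m n E (-i) * fV m E (-r) s - fV m E (-(i - 1)) s * fV m E (-r) (-i)
      ∈ Kid m n E := by
  set f := fV m E (-r) s
  set G := E ((m : ℤ) + s + 2) ((m : ℤ) + -i + 2)
  have hG : fV m E (-(i - 1)) s = G := by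
    simp only [fV, G]
    congr 1
    ring
  have hcomm : ∀ k ∈ Finset.Icc (-(m : ℤ)) (-i), k ≠ -r →
      eV m E k (-i) * f = f * eV m E k (-i) := by
    intro k hk hkr
    rw [Finset.mem_Icc] at hk
    exact hE.mul_comm_of_ne ⟨by omega, by omega⟩ ⟨by omega, by omega⟩ ⟨by omega, by omega⟩
      ⟨by omega, by omega⟩ (by omega) (by omega) (by omega)
  have hcomm₀ : eV m E (-r) (-i) * f = f * eV m E (-r) (-i) + -G := by
    rw [← sub_eq_add_neg]
    exact hE.mul_comm_of_eq_left ⟨by omega, by omega⟩ ⟨by omega, by omega⟩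
      ⟨by omega, by omega⟩ ⟨by omega, by omega⟩ (by omega) (by omega) rfl
  have hB : G * fV m E (-r) (-i) = f + fV m E (-r) (-i) * G := by
    rw [hE.mul_comm_of_eq_left ⟨by omega, by omega⟩ ⟨by omega, by omega⟩
      ⟨by omega, by omega⟩ ⟨by omega, by omega⟩ (by omega) (by omega) rfl]
    abel
  have hS : ∑ k ∈ Finset.Icc (-(m : ℤ)) (-i), fV m E k (-i) * f * eV m E k (-i)
      ∈ Kid m n E :=
    Submodule.sum_mem _ fun k hk => by
      rw [Finset.mem_Icc] at hk
      exact mul_E_mem_Kid _ (by omega) (by omega) (by omega)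
  rw [OmegaV, if_pos (by omega), sub_mul, one_mul,
    Finset.sum_mul_mul_eq_of_mul_eq (by rw [Finset.mem_Icc]; omega) _ _ hcomm hcomm₀, hG, hB]
  convert neg_mem hS using 1
  noncomm_ring

theorem OmegaV_mul_fV_add_mem_Kid (hE : glRel m n E) (hi : 1 ≤ i) (his : i ≤ s)
    (hr0 : 0 ≤ r) (hrm : r ≤ (m : ℤ)) (hsn : s ≤ (n : ℤ)) :
    OmegaV m n E i * fV m E (-r) s + fV m E (-r) (i - 1) * fV m E i s ∈ Kid m n E := by
  set f := fV m E (-r) s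
  set G := E ((m : ℤ) + i + 1) ((m : ℤ) + -r + 1)
  have hG : fV m E (-r) (i - 1) = G := by
    simp only [fV, G]
    congr 1
    ring
  have hcomm : ∀ k ∈ Finset.Icc i (n : ℤ), k ≠ s → eV m E i k * f = f * eV m E i k := by
    intro k hk hks
    rw [Finset.mem_Icc] at hk
    exact hE.mul_comm_of_ne ⟨by omega, by omega⟩ ⟨by omega, by omega⟩ ⟨by omega, by omega⟩
      ⟨by omega, by omega⟩ (by omega) (by omega) (by omega)
  have hcomm₀ : eV m E i s * f = f * eV m E i s + G :=
    hE.mul_comm_of_eq_right ⟨by omega, by omega⟩ ⟨by omega, by omega⟩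
      ⟨by omega, by omega⟩ ⟨by omega, by omega⟩ (by omega) rfl (by omega)
  have hB : fV m E i s * G = G * fV m E i s + f :=
    hE.mul_comm_of_eq_right ⟨by omega, by omega⟩ ⟨by omega, by omega⟩
      ⟨by omega, by omega⟩ ⟨by omega, by omega⟩ (by omega) rfl (by omega)
  have hS : ∑ k ∈ Finset.Icc i (n : ℤ), fV m E i k * f * eV m E i k ∈ Kid m n E :=
    Submodule.sum_mem _ fun k hk => by
      rw [Finset.mem_Icc] at hk
      exact mul_E_mem_Kid _ (by omega) (by omega) (by omega)
  rw [OmegaV, if_neg (by omega), sub_mul, one_mul,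
    Finset.sum_mul_mul_eq_of_mul_eq (by rw [Finset.mem_Icc]; omega) _ _ hcomm hcomm₀, hG]
  convert neg_mem hS using 1
  rw [hB]
  noncomm_ring

end Expansion

theorem stmt15_general (m n : ℕ) (U : Type*) [Ring U] [Algebra ℂ U] (E : ℤ → ℤ → U)
    (hE : glRel m n E) (φ : U →ₗ[ℂ] U)
    (hfix : ∀ g ∈ Lsub m n E, φ g = g)
    (hker : ∀ x ∈ Kid m n E, φ x = 0)
    (r s : ℤ) (hr0 : 0 ≤ r) (hrm : r ≤ (m : ℤ)) (hs0 : 0 ≤ s) (hsn : s ≤ (n : ℤ))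
    (c : ℂ) :
    (∀ i : ℤ, 1 ≤ i → i ≤ r →
      chiOp m n E φ (-i) c (fV m E (-r) s)
        - (c • fV m E (-r) s + fV m E (-(i - 1)) s * fV m E (-r) (-i))
        ∈ Kid m n E) ∧
    (∀ i : ℤ, 1 ≤ i → i ≤ s →
      chiOp m n E φ i c (fV m E (-r) s)
        - (c • fV m E (-r) s - fV m E (-r) (i - 1) * fV m E i s)
        ∈ Kid m n E) := by
  refine ⟨fun i hi hir => ?_, fun i hi his => ?_⟩
  · exact chiOp_sub_mem_Kid hfix hker c
      (mul_mem (E_mem_Lsub (by omega) (by omega) (by omega))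
        (E_mem_Lsub (by omega) (by omega) (by omega)))
      (OmegaV_neg_mul_fV_sub_mem_Kid hE hi hir hrm hs0 hsn)
  · rw [sub_eq_add_neg (c • _)]
    refine chiOp_sub_mem_Kid hfix hker c
      (neg_mem (mul_mem (E_mem_Lsub (by omega) (by omega) (by omega))
        (E_mem_Lsub (by omega) (by omega) (by omega)))) ?_
    rw [sub_neg_eq_add]
    exact OmegaV_mul_fV_add_mem_Kid hE hi his hr0 hrm hsn

/-- The single-index expansions (5.7), as identities modulo the left ideal `U(G)G⁺`:
for `-r ≤ -i < 0`: `χ_{-i,c} f_{-r,s} ≡ c·f_{-r,s} + f_{-(i-1),s} f_{-r,-i}`, and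
for `0 < i ≤ s`: `χ_{i,c} f_{-r,s} ≡ c·f_{-r,s} − f_{-r,i-1} f_{i,s}`. -/
theorem stmt15 (m n : ℕ) (U : Type*) [Ring U] [Algebra ℂ U] (E : ℤ → ℤ → U)
    (hE : glRel m n E) (φ : U →ₗ[ℂ] U)
    (hrange : ∀ u : U, φ u ∈ Lsub m n E)
    (hfix : ∀ g ∈ Lsub m n E, φ g = g)
    (hker : ∀ x ∈ Kid m n E, φ x = 0)
    (hdec : ∀ u : U, u - φ u ∈ Kid m n E)
    (r s : ℤ) (hr0 : 0 ≤ r) (hrm : r ≤ (m : ℤ)) (hs0 : 0 ≤ s) (hsn : s ≤ (n : ℤ))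
    (c : ℂ) :
    (∀ i : ℤ, 1 ≤ i → i ≤ r →
      chiOp m n E φ (-i) c (fV m E (-r) s)
        - (c • fV m E (-r) s + fV m E (-(i - 1)) s * fV m E (-r) (-i))
        ∈ Kid m n E) ∧
    (∀ i : ℤ, 1 ≤ i → i ≤ s →
      chiOp m n E φ i c (fV m E (-r) s)
        - (c • fV m E (-r) s - fV m E (-r) (i - 1) * fV m E i s)
        ∈ Kid m n E) :=
  stmt15_general m n U E hE φ hfix hker r s hr0 hrm hs0 hsn c
end

section
/- Let Σ be the weight of a weakly primitive vector in the Kac-module V̄(Λ). Then ⟨Λ+ρ | Λ+ρ⟩ = ⟨Σ+ρ | Σ+ρ⟩, where ρ = ρ₀ − ρ₁ is the half-sum of positive even roots minus the half-sum of positive odd roots and ⟨·|·⟩ is the standard bilinear form with ⟨ε_a|ε_b⟩ = δ_{ab}, ⟨ε_a|δ_b⟩ = 0, ⟨δ_a|δ_b⟩ = −δ_{ab}. -/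
/-- `(a,b)` is an even pair iff `E_{ab}` lies in the even part `G₀̄`; for `a < b`,
the root of `E_{ab}` is even iff `evenPair m a b`, odd otherwise. -/
abbrev evenPair (m : ℕ) (a b : ℤ) : Prop :=
  (a ≤ (m : ℤ) + 1 ∧ b ≤ (m : ℤ) + 1) ∨ ((m : ℤ) + 2 ≤ a ∧ (m : ℤ) + 2 ≤ b)

/-- The standard bilinear form on weights, in the coordinates `μ x` of
`μ = Σ_{a} μ_a ε_a + Σ_c μ_{m+1+c} δ_c`:
`⟨μ|ν⟩ = Σ_{x=1}^{m+1} μ_x ν_x − Σ_{x=m+2}^{m+n+2} μ_x ν_x`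
(so `⟨ε_a|ε_b⟩ = δ_{ab}`, `⟨ε_a|δ_b⟩ = 0`, `⟨δ_a|δ_b⟩ = −δ_{ab}`). -/
noncomputable def formW (m n : ℕ) (μ ν : ℤ → ℂ) : ℂ :=
  (∑ x ∈ Finset.Icc (1 : ℤ) ((m : ℤ) + 1), μ x * ν x)
    - ∑ x ∈ Finset.Icc ((m : ℤ) + 2) ((m : ℤ) + n + 2), μ x * ν x

/-- The coordinates of `ρ = ρ₀ − ρ₁`, the half-sum of positive even roots minus
the half-sum of positive odd roots; the positive root attached to the pair
`(a,b)`, `a < b`, has coordinates `x ↦ δ_{x,a} − δ_{x,b}`. -/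
noncomputable def rhoW (m n : ℕ) (x : ℤ) : ℂ :=
  (1 / 2) *
    ((∑ p ∈ ((Finset.Icc (1 : ℤ) ((m : ℤ) + n + 2)) ×ˢ
        (Finset.Icc (1 : ℤ) ((m : ℤ) + n + 2))).filter
          (fun p => p.1 < p.2 ∧ evenPair m p.1 p.2),
        ((if x = p.1 then (1 : ℂ) else 0) - (if x = p.2 then 1 else 0)))
     - ∑ p ∈ ((Finset.Icc (1 : ℤ) ((m : ℤ) + n + 2)) ×ˢ
        (Finset.Icc (1 : ℤ) ((m : ℤ) + n + 2))).filter
          (fun p => p.1 < p.2 ∧ ¬ evenPair m p.1 p.2),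
        ((if x = p.1 then (1 : ℂ) else 0) - (if x = p.2 then 1 else 0)))

namespace Stmt18

noncomputable def sg (m : ℕ) (x : ℤ) : ℂ := if (m:ℤ)+1 < x then -1 else 1
noncomputable def sA (m : ℕ) (a b c d : ℤ) : ℂ := if podd m a b && podd m c d then -1 else 1
lemma ssgn_smul {V : Type*} [AddCommGroup V] [Module ℂ V] (m : ℕ) (a b c d : ℤ) (x : V) :
    ssgn m a b c d • x = sA m a b c d • x := by
  rw [ssgn, sA]; split_ifs <;> simp [← Int.cast_smul_eq_zsmul ℂ]
lemma sA_mul_self (m : ℕ) (a b c d : ℤ) : sA m a b c d * sA m a b c d = 1 := by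
  rw [sA]; split_ifs <;> norm_num
lemma sA_symm (m : ℕ) (a b c d : ℤ) : sA m b a c d = sA m a b c d := by
  simp [sA, podd, Bool.xor_comm]
lemma sg_mul_sA (m : ℕ) (a c d : ℤ) :
    sg m c * sA m a c c d = sg m d * sA m a d c d := by
  by_cases h1 : (m:ℤ)+1 < a <;> by_cases h2 : (m:ℤ)+1 < c <;> by_cases h3 : (m:ℤ)+1 < d <;>
    simp [sg, sA, podd, h1, h2, h3]
variable {V : Type*} [AddCommGroup V] [Module ℂ V]
lemma key (m n : ℕ) (act : ℤ → ℤ → Module.End ℂ V) (hAct : glRel m n act)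
    {a b c d : ℤ} (ha1 : 1 ≤ a) (ha2 : a ≤ (m:ℤ)+n+2) (hb1 : 1 ≤ b) (hb2 : b ≤ (m:ℤ)+n+2)
    (hc1 : 1 ≤ c) (hc2 : c ≤ (m:ℤ)+n+2) (hd1 : 1 ≤ d) (hd2 : d ≤ (m:ℤ)+n+2) :
    act a b * act b a * act c d = act c d * (act a b * act b a) +
      (sA m a b c d • (if b = c then act a d * act b a else 0)
       - (if d = a then act c b * act b a else 0)
       + (if a = c then act a b * act b d else 0)
       - sA m a b c d • (if d = b then act a b * act c a else 0)) := by
  have h1 := hAct b a c d hb1 hb2 ha1 ha2 hc1 hc2 hd1 hd2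
  have h2 := hAct a b c d ha1 ha2 hb1 hb2 hc1 hc2 hd1 hd2
  simp only [ssgn_smul] at h1 h2
  rw [sA_symm] at h1
  rw [mul_assoc, h1]
  rw [mul_add, mul_sub, mul_smul_comm, mul_smul_comm, ← mul_assoc, h2]
  simp only [add_mul, sub_mul, smul_mul_assoc, smul_add, smul_sub, smul_smul, sA_mul_self,
    one_smul, mul_ite, ite_mul, mul_zero, zero_mul, smul_zero, mul_assoc]
  module

noncomputable def Om (m n : ℕ) (act : ℤ → ℤ → Module.End ℂ V) : Module.End ℂ V :=
  ∑ a ∈ Finset.Icc (1:ℤ) ((m:ℤ)+n+2), ∑ b ∈ Finset.Icc (1:ℤ) ((m:ℤ)+n+2),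
    sg m b • (act a b * act b a)

lemma commOm (m n : ℕ) (act : ℤ → ℤ → Module.End ℂ V) (hAct : glRel m n act)
    {c d : ℤ} (hc1 : 1 ≤ c) (hc2 : c ≤ (m:ℤ)+n+2) (hd1 : 1 ≤ d) (hd2 : d ≤ (m:ℤ)+n+2) :
    Om m n act * act c d = act c d * Om m n act := by
  set S := Finset.Icc (1:ℤ) ((m:ℤ)+n+2) with hS
  have hc : c ∈ S := Finset.mem_Icc.mpr ⟨hc1, hc2⟩
  have hd : d ∈ S := Finset.mem_Icc.mpr ⟨hd1, hd2⟩
  rw [Om, Finset.sum_mul, Finset.mul_sum]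
  rw [← sub_eq_zero, ← Finset.sum_sub_distrib]
  have step1 : ∀ a ∈ S,
      (∑ b ∈ S, sg m b • (act a b * act b a)) * act c d
        - act c d * ∑ b ∈ S, sg m b • (act a b * act b a)
      = ∑ b ∈ S,
          ((if b = c then (sg m b * sA m a b c d) • (act a d * act b a) else 0)
           - (if d = a then sg m b • (act c b * act b a) else 0)
           + (if a = c then sg m b • (act a b * act b d) else 0)
           - (if d = b then (sg m b * sA m a b c d) • (act a b * act c a) else 0)) := by
    intro a ha
    obtain ⟨ha1, ha2⟩ := Finset.mem_Icc.mp ha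
    rw [Finset.sum_mul, Finset.mul_sum, ← Finset.sum_sub_distrib]
    refine Finset.sum_congr rfl fun b hb => ?_
    obtain ⟨hb1, hb2⟩ := Finset.mem_Icc.mp hb
    rw [smul_mul_assoc, mul_smul_comm, key m n act hAct ha1 ha2 hb1 hb2 hc1 hc2 hd1 hd2]
    simp only [smul_add, smul_sub, smul_smul, smul_ite, smul_zero]
    abel
  rw [Finset.sum_congr rfl step1]
  simp only [Finset.sum_add_distrib, Finset.sum_sub_distrib]
  have hT1 : ∀ a ∈ S, (∑ b ∈ S, if b = c then (sg m b * sA m a b c d) • (act a d * act b a) else 0)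
      = (sg m c * sA m a c c d) • (act a d * act c a) := by
    intro a _
    rw [Finset.sum_ite_eq' S c (fun b => (sg m b * sA m a b c d) • (act a d * act b a)), if_pos hc]
  have hT4 : ∀ a ∈ S, (∑ b ∈ S, if d = b then (sg m b * sA m a b c d) • (act a b * act c a) else 0)
      = (sg m d * sA m a d c d) • (act a d * act c a) := by
    intro a _
    rw [Finset.sum_ite_eq S d (fun b => (sg m b * sA m a b c d) • (act a b * act c a)), if_pos hd]
  have hT2 : (∑ a ∈ S, ∑ b ∈ S, if d = a then sg m b • (act c b * act b a) else 0)
      = ∑ b ∈ S, sg m b • (act c b * act b d) := by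
    rw [Finset.sum_comm]
    refine Finset.sum_congr rfl fun b _ => ?_
    rw [Finset.sum_ite_eq S d (fun a => sg m b • (act c b * act b a)), if_pos hd]
  have hT3 : (∑ a ∈ S, ∑ b ∈ S, if a = c then sg m b • (act a b * act b d) else 0)
      = ∑ b ∈ S, sg m b • (act c b * act b d) := by
    rw [Finset.sum_comm]
    refine Finset.sum_congr rfl fun b _ => ?_
    rw [Finset.sum_ite_eq' S c (fun a => sg m b • (act a b * act b d)), if_pos hc]
  rw [Finset.sum_congr rfl hT1, Finset.sum_congr rfl hT4, hT2, hT3]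
  have h14 : (∑ a ∈ S, (sg m c * sA m a c c d) • (act a d * act c a))
      = ∑ a ∈ S, (sg m d * sA m a d c d) • (act a d * act c a) :=
    Finset.sum_congr rfl fun a _ => by rw [sg_mul_sA]
  rw [h14]
  abel
lemma sg_mul_sA_diag (m : ℕ) (a b : ℤ) : sg m b * sA m a b b a = sg m a := by
  by_cases h1 : (m:ℤ)+1 < a <;> by_cases h2 : (m:ℤ)+1 < b <;>
    simp [sg, sA, podd, h1, h2]
noncomputable def eig (m n : ℕ) (μ : ℤ → ℂ) : ℂ :=
  ∑ a ∈ Finset.Icc (1:ℤ) ((m:ℤ)+n+2), ∑ b ∈ Finset.Icc (1:ℤ) ((m:ℤ)+n+2),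
    ((if a = b then sg m a * μ a * μ a else 0) +
     (if a < b then sg m b * μ a - sg m a * μ b else 0))

lemma eigen_mem (m n : ℕ) (act : ℤ → ℤ → Module.End ℂ V) (hAct : glRel m n act)
    (W' : Submodule ℂ V)
    (hWinv : ∀ a b : ℤ, 1 ≤ a → a ≤ (m : ℤ) + n + 2 → 1 ≤ b → b ≤ (m : ℤ) + n + 2 →
      ∀ x ∈ W', act a b x ∈ W')
    (u : V) (μ : ℤ → ℂ)
    (hw : ∀ a : ℤ, 1 ≤ a → a ≤ (m : ℤ) + n + 2 → act a a u = μ a • u)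
    (hp : ∀ a b : ℤ, 1 ≤ a → a < b → b ≤ (m : ℤ) + n + 2 → act a b u ∈ W') :
    Om m n act u - eig m n μ • u ∈ W' := by
  rw [Om, eig]
  simp only [LinearMap.coe_sum, Finset.sum_apply, LinearMap.smul_apply, Module.End.mul_apply,
    Finset.sum_smul]
  rw [← Finset.sum_sub_distrib]
  refine Submodule.sum_mem _ fun a ha => ?_
  rw [← Finset.sum_sub_distrib]
  refine Submodule.sum_mem _ fun b hb => ?_
  obtain ⟨ha1, ha2⟩ := Finset.mem_Icc.mp ha
  obtain ⟨hb1, hb2⟩ := Finset.mem_Icc.mp hb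
  rcases lt_trichotomy a b with h | h | h
  · rw [if_neg (ne_of_lt h), if_pos h, zero_add]
    have hrel := hAct a b b a ha1 ha2 hb1 hb2 hb1 hb2 ha1 ha2
    simp only [ssgn_smul, eq_self_iff_true, if_true] at hrel
    have happ := LinearMap.congr_fun hrel u
    simp only [Module.End.mul_apply, LinearMap.add_apply, LinearMap.sub_apply,
      LinearMap.smul_apply] at happ
    rw [hw a ha1 ha2, hw b hb1 hb2] at happ
    have hmem : act b a (act a b u) ∈ W' :=
      hWinv b a hb1 hb2 ha1 ha2 _ (hp a b ha1 h hb2)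
    have hcalc : sg m b • act a b (act b a u) - (sg m b * μ a - sg m a * μ b) • u
        = (sg m b * sA m a b b a) • (act b a (act a b u)) := by
      rw [happ, ← sg_mul_sA_diag m a b]
      module
    rw [hcalc]
    exact Submodule.smul_mem _ _ hmem
  · subst h
    rw [if_pos rfl, if_neg (lt_irrefl a), add_zero]
    have : sg m a • act a a (act a a u) - (sg m a * μ a * μ a) • u = 0 := by
      rw [hw a ha1 ha2, map_smul, hw a ha1 ha2]
      module
    rw [this]; exact zero_mem _
  · rw [if_neg (ne_of_gt h), if_neg (not_lt.mpr (le_of_lt h)), add_zero, zero_smul, sub_zero]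
    exact Submodule.smul_mem _ _ (hWinv a b ha1 ha2 hb1 hb2 _ (hp b a hb1 h ha2))
lemma eps_sg (m : ℕ) (a b : ℤ) :
    (if evenPair m a b then (1:ℂ) else -1) * sg m a = sg m b := by
  by_cases h1 : (m:ℤ)+1 < a <;> by_cases h2 : (m:ℤ)+1 < b
  · rw [if_pos (by omega)]; simp [sg, h1, h2]
  · rw [if_neg (by omega)]; simp [sg, h1, h2]
  · rw [if_neg (by omega)]; simp [sg, h1, h2]
  · rw [if_pos (by omega)]; simp [sg, h1, h2]

lemma formW_eq (m n : ℕ) (μ ν : ℤ → ℂ) :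
    formW m n μ ν = ∑ x ∈ Finset.Icc (1:ℤ) ((m:ℤ)+n+2), sg m x * (μ x * ν x) := by
  have hsplit : Finset.Icc (1:ℤ) ((m:ℤ)+n+2)
      = Finset.Icc (1:ℤ) ((m:ℤ)+1) ∪ Finset.Icc ((m:ℤ)+2) ((m:ℤ)+n+2) := by
    ext x; simp only [Finset.mem_Icc, Finset.mem_union]; omega
  have hdisj : Disjoint (Finset.Icc (1:ℤ) ((m:ℤ)+1)) (Finset.Icc ((m:ℤ)+2) ((m:ℤ)+n+2)) := by
    rw [Finset.disjoint_left]
    intro x h1 h2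
    simp only [Finset.mem_Icc] at h1 h2
    omega
  rw [formW, hsplit, Finset.sum_union hdisj, sub_eq_add_neg,
    ← Finset.sum_neg_distrib]
  congr 1
  · refine Finset.sum_congr rfl fun x hx => ?_
    simp only [Finset.mem_Icc] at hx
    rw [sg, if_neg (by omega), one_mul]
  · refine Finset.sum_congr rfl fun x hx => ?_
    simp only [Finset.mem_Icc] at hx
    rw [sg, if_pos (by omega)]
    ring

lemma rho_two (m n : ℕ) (x : ℤ) :
    rhoW m n x * 2 =
      ∑ p ∈ ((Finset.Icc (1 : ℤ) ((m : ℤ) + n + 2)) ×ˢ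
        (Finset.Icc (1 : ℤ) ((m : ℤ) + n + 2))).filter (fun p => p.1 < p.2),
        (if evenPair m p.1 p.2 then (1:ℂ) else -1) *
          ((if x = p.1 then (1 : ℂ) else 0) - (if x = p.2 then 1 else 0)) := by
  set T := (Finset.Icc (1 : ℤ) ((m : ℤ) + n + 2)) ×ˢ (Finset.Icc (1 : ℤ) ((m : ℤ) + n + 2))
  set f : ℤ × ℤ → ℂ := fun p => (if x = p.1 then (1 : ℂ) else 0) - (if x = p.2 then 1 else 0)
    with hf
  have h1 : (T.filter (fun p => p.1 < p.2)).filter (fun p => evenPair m p.1 p.2)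
      = T.filter (fun p => p.1 < p.2 ∧ evenPair m p.1 p.2) := by
    rw [Finset.filter_filter]
  have h2 : (T.filter (fun p => p.1 < p.2)).filter (fun p => ¬ evenPair m p.1 p.2)
      = T.filter (fun p => p.1 < p.2 ∧ ¬ evenPair m p.1 p.2) := by
    rw [Finset.filter_filter]
  rw [← Finset.sum_filter_add_sum_filter_not (T.filter (fun p => p.1 < p.2))
    (fun p => evenPair m p.1 p.2)
    (fun p => (if evenPair m p.1 p.2 then (1:ℂ) else -1) * f p)]
  have e1 : ∑ p ∈ (T.filter (fun p => p.1 < p.2)).filter (fun p => evenPair m p.1 p.2),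
      (if evenPair m p.1 p.2 then (1:ℂ) else -1) * f p
      = ∑ p ∈ T.filter (fun p => p.1 < p.2 ∧ evenPair m p.1 p.2), f p := by
    rw [h1]
    refine Finset.sum_congr rfl fun p hp => ?_
    simp only [Finset.mem_filter] at hp
    rw [if_pos hp.2.2, one_mul]
  have e2 : ∑ p ∈ (T.filter (fun p => p.1 < p.2)).filter (fun p => ¬ evenPair m p.1 p.2),
      (if evenPair m p.1 p.2 then (1:ℂ) else -1) * f p
      = - ∑ p ∈ T.filter (fun p => p.1 < p.2 ∧ ¬ evenPair m p.1 p.2), f p := by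
    rw [h2, ← Finset.sum_neg_distrib]
    refine Finset.sum_congr rfl fun p hp => ?_
    simp only [Finset.mem_filter] at hp
    rw [if_neg hp.2.2]
    ring
  rw [e1, e2, rhoW]
  ring

lemma eig_eq (m n : ℕ) (μ : ℤ → ℂ) :
    eig m n μ = formW m n μ μ + formW m n μ (rhoW m n) * 2 := by
  set S := Finset.Icc (1:ℤ) ((m:ℤ)+n+2) with hS
  set T := S ×ˢ S with hT
  -- second form term
  have hform2 : formW m n μ (rhoW m n) * 2
      = ∑ p ∈ T.filter (fun p => p.1 < p.2), (sg m p.2 * μ p.1 - sg m p.1 * μ p.2) := by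
    rw [formW_eq, Finset.sum_mul]
    have hterm : ∀ x ∈ S, sg m x * (μ x * rhoW m n x) * 2
        = ∑ p ∈ T.filter (fun p => p.1 < p.2),
            (if evenPair m p.1 p.2 then (1:ℂ) else -1) * (sg m x * μ x) *
              ((if x = p.1 then (1 : ℂ) else 0) - (if x = p.2 then 1 else 0)) := by
      intro x _
      have : sg m x * (μ x * rhoW m n x) * 2 = (sg m x * μ x) * (rhoW m n x * 2) := by ring
      rw [this, rho_two, Finset.mul_sum]
      exact Finset.sum_congr rfl fun p _ => by ring
    rw [Finset.sum_congr rfl hterm, Finset.sum_comm]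
    refine Finset.sum_congr rfl fun p hp => ?_
    simp only [Finset.mem_filter, hT, Finset.mem_product] at hp
    obtain ⟨⟨hp1, hp2⟩, hplt⟩ := hp
    have expand : ∀ x ∈ S,
        (if evenPair m p.1 p.2 then (1:ℂ) else -1) * (sg m x * μ x) *
          ((if x = p.1 then (1 : ℂ) else 0) - (if x = p.2 then 1 else 0))
        = (if x = p.1 then (if evenPair m p.1 p.2 then (1:ℂ) else -1) * (sg m x * μ x) else 0)
          - (if x = p.2 then (if evenPair m p.1 p.2 then (1:ℂ) else -1) * (sg m x * μ x) else 0) := by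
      intro x _
      split_ifs <;> ring
    rw [Finset.sum_congr rfl expand, Finset.sum_sub_distrib,
      Finset.sum_ite_eq' S p.1, Finset.sum_ite_eq' S p.2, if_pos hp1, if_pos hp2]
    have k1 : (if evenPair m p.1 p.2 then (1:ℂ) else -1) * (sg m p.1 * μ p.1)
        = sg m p.2 * μ p.1 := by rw [← mul_assoc, eps_sg]
    have k2 : (if evenPair m p.1 p.2 then (1:ℂ) else -1) * (sg m p.2 * μ p.2)
        = sg m p.1 * μ p.2 := by
      have := eps_sg m p.2 p.1
      rw [← mul_assoc]
      rw [show (if evenPair m p.1 p.2 then (1:ℂ) else -1) = (if evenPair m p.2 p.1 then (1:ℂ) else -1) by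
        by_cases h : evenPair m p.1 p.2
        · rw [if_pos h, if_pos (by omega)]
        · rw [if_neg h, if_neg (by omega)]]
      rw [this]
    rw [k1, k2]
  rw [hform2, formW_eq, eig]
  simp only [Finset.sum_add_distrib]
  congr 1
  · rw [← hS]
    refine Finset.sum_congr rfl fun a ha => ?_
    rw [Finset.sum_ite_eq S a (fun b => sg m a * μ a * μ a), if_pos ha]
    ring
  · rw [Finset.sum_filter, hT, Finset.sum_product]

end Stmt18

open Stmt18

/-- If `Σ` is the weight of a weakly primitive vector of the Kac-module `V̄(Λ)`,
then `⟨Λ+ρ|Λ+ρ⟩ = ⟨Σ+ρ|Σ+ρ⟩`. -/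
theorem stmt18 (m n : ℕ) (V : Type*) [AddCommGroup V] [Module ℂ V]
    (act : ℤ → ℤ → Module.End ℂ V) (hAct : glRel m n act)
    (vL : V) (hvL : vL ≠ 0) (Lam : ℤ → ℂ)
    (hwL : ∀ a : ℤ, 1 ≤ a → a ≤ (m : ℤ) + n + 2 → act a a vL = Lam a • vL)
    (hhwL : ∀ a b : ℤ, 1 ≤ a → a < b → b ≤ (m : ℤ) + n + 2 → act a b vL = 0)
    (hgen : ∀ x : V, x ∈ Submodule.span ℂ
      {w | ∃ l : List (ℤ × ℤ),
        (∀ p ∈ l, 1 ≤ p.1 ∧ p.1 ≤ (m : ℤ) + n + 2 ∧ 1 ≤ p.2 ∧ p.2 ≤ (m : ℤ) + n + 2) ∧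
        w = l.foldr (fun p w => act p.1 p.2 w) vL})
    (v : V) (Sg : ℤ → ℂ)
    (hwv : ∀ a : ℤ, 1 ≤ a → a ≤ (m : ℤ) + n + 2 → act a a v = Sg a • v)
    (W : Submodule ℂ V)
    (hWinv : ∀ a b : ℤ, 1 ≤ a → a ≤ (m : ℤ) + n + 2 → 1 ≤ b → b ≤ (m : ℤ) + n + 2 →
      ∀ x ∈ W, act a b x ∈ W)
    (hvW : v ∉ W)
    (hprim : ∀ a b : ℤ, 1 ≤ a → a < b → b ≤ (m : ℤ) + n + 2 → act a b v ∈ W) :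
    formW m n (fun x => Lam x + rhoW m n x) (fun x => Lam x + rhoW m n x)
      = formW m n (fun x => Sg x + rhoW m n x) (fun x => Sg x + rhoW m n x) := by
  classical
  have key1 : Om m n act vL = eig m n Lam • vL := by
    have h := eigen_mem m n act hAct ⊥
      (fun a b _ _ _ _ x hx => by
        rw [Submodule.mem_bot] at hx ⊢; rw [hx, map_zero]) vL Lam hwL
      (fun a b h1 h2 h3 => (Submodule.mem_bot ℂ).mpr (hhwL a b h1 h2 h3))
    rw [Submodule.mem_bot, sub_eq_zero] at h
    exact h
  have hfold : ∀ l : List (ℤ × ℤ),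
      (∀ p ∈ l, 1 ≤ p.1 ∧ p.1 ≤ (m:ℤ)+n+2 ∧ 1 ≤ p.2 ∧ p.2 ≤ (m:ℤ)+n+2) →
      Om m n act (l.foldr (fun p w => act p.1 p.2 w) vL)
        = eig m n Lam • l.foldr (fun p w => act p.1 p.2 w) vL := by
    intro l
    induction l with
    | nil => intro _; simpa using key1
    | cons p t ih =>
      intro hl
      obtain ⟨h1, h2, h3, h4⟩ := hl p List.mem_cons_self
      have ht := ih (fun q hq => hl q (List.mem_cons_of_mem p hq))
      have hcomm := commOm m n act hAct h1 h2 h3 h4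
      have happ := LinearMap.congr_fun hcomm (t.foldr (fun p w => act p.1 p.2 w) vL)
      simp only [Module.End.mul_apply] at happ
      simp only [List.foldr_cons]
      rw [happ, ht, map_smul]
  have hOmv : Om m n act v = eig m n Lam • v := by
    refine Submodule.span_induction ?_ ?_ ?_ ?_ (hgen v)
    · rintro w ⟨l, hl, rfl⟩; exact hfold l hl
    · simp
    · intro x y _ _ hx hy; rw [map_add, hx, hy, smul_add]
    · intro a x _ hx; rw [map_smul, hx, smul_comm]
  have hvmem := eigen_mem m n act hAct W hWinv v Sg hwv hprim
  have hdiff : (eig m n Lam - eig m n Sg) • v ∈ W := by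
    rw [sub_smul, ← hOmv]; exact hvmem
  have heq : eig m n Lam = eig m n Sg := by
    by_contra hne
    apply hvW
    have h0 : eig m n Lam - eig m n Sg ≠ 0 := sub_ne_zero.mpr hne
    have hmem := W.smul_mem (eig m n Lam - eig m n Sg)⁻¹ hdiff
    rwa [smul_smul, inv_mul_cancel₀ h0, one_smul] at hmem
  have harr : ∀ μ : ℤ → ℂ,
      formW m n (fun x => μ x + rhoW m n x) (fun x => μ x + rhoW m n x)
        = eig m n μ + formW m n (rhoW m n) (rhoW m n) := by
    intro μ
    rw [eig_eq, formW_eq, formW_eq, formW_eq, formW_eq]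
    rw [Finset.sum_mul, ← Finset.sum_add_distrib, ← Finset.sum_add_distrib]
    exact Finset.sum_congr rfl fun x _ => by ring
  rw [harr Lam, harr Sg, heq]
end
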